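/- Let R_1, …, R_K be real symmetric positive semidefinite d×d matrices with sum R = Σ_{k=1}^K R_k, and let W_1, …, W_K be d×q real matrices. Suppose W_A is a d×q real matrix satisfying the aggregation rule W_A D Vᵀ = Σ_{k=1}^K R_k W_k, where D is a q×q diagonal matrix with strictly positive diagonal entries and V is a q×q real matrix with orthonormal columns (Vᵀ V = I). Then for any d×q real matrix Ŵ with ‖Ŵ‖ ≤ 1, one has ‖W_A − Ŵ‖ ≤ K · S_3 · max_{1≤k≤K} ‖W_k − Ŵ‖ + S_3 + 1, where S_3 = λmax(R) / min{diag(D)}. -/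

import Mathlib

open Matrix BigOperators

/-- The spectral norm (ℓ²→ℓ² operator norm) of a real matrix. -/
noncomputable def specNorm {m n : ℕ} (A : Matrix (Fin m) (Fin n) ℝ) : ℝ :=
  ‖LinearMap.toContinuousLinearMap (Matrix.toEuclideanLin A)‖

/-- The largest (real) eigenvalue of a real matrix, as the supremum of its real spectrum. -/
noncomputable def lambdaMax {d : ℕ} (A : Matrix (Fin d) (Fin d) ℝ) : ℝ :=
  sSup (spectrum ℝ A)

/-- The smallest (real) eigenvalue of a real matrix, as the infimum of its real spectrum. -/
noncomputable def lambdaMin {d : ℕ} (A : Matrix (Fin d) (Fin d) ℝ) : ℝ :=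
  sInf (spectrum ℝ A)

open scoped Matrix.Norms.L2Operator

lemma specNorm_eq_l2 {m n : ℕ} (A : Matrix (Fin m) (Fin n) ℝ) : specNorm A = ‖A‖ := rfl

lemma le_of_sq_le_sq' {a b : ℝ} (_ha : 0 ≤ a) (hb : 0 ≤ b) (h : a^2 ≤ b^2) : a ≤ b := by
  nlinarith

lemma euc_norm_sq {m : ℕ} (v : Fin m → ℝ) :
    ‖(WithLp.equiv 2 (Fin m → ℝ)).symm v‖ ^ 2 = v ⬝ᵥ v := by
  rw [← real_inner_self_eq_norm_sq]
  change v ⬝ᵥ star v = v ⬝ᵥ v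
  simp [dotProduct]

lemma euc_inner_eq {m : ℕ} (v w : Fin m → ℝ) :
    v ⬝ᵥ w = inner ℝ ((WithLp.equiv 2 (Fin m → ℝ)).symm v) ((WithLp.equiv 2 (Fin m → ℝ)).symm w) := by
  change v ⬝ᵥ w = w ⬝ᵥ star v
  simp [dotProduct, mul_comm]

lemma opnorm_le_of_forall {m n : ℕ} (A : Matrix (Fin m) (Fin n) ℝ) {c : ℝ} (hc : 0 ≤ c)
    (h : ∀ v : Fin n → ℝ, ‖(WithLp.equiv 2 (Fin m → ℝ)).symm (A *ᵥ v)‖ ≤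
      c * ‖(WithLp.equiv 2 (Fin n → ℝ)).symm v‖) :
    ‖A‖ ≤ c := by
  rw [Matrix.l2_opNorm_def]
  apply ContinuousLinearMap.opNorm_le_bound _ hc
  intro x
  simpa [Matrix.toEuclideanLin_apply] using h ((WithLp.equiv 2 (Fin n → ℝ)) x)

lemma mulVec_norm_le {m n : ℕ} (A : Matrix (Fin m) (Fin n) ℝ) (v : Fin n → ℝ) :
    ‖(WithLp.equiv 2 (Fin m → ℝ)).symm (A *ᵥ v)‖ ≤ ‖A‖ * ‖(WithLp.equiv 2 (Fin n → ℝ)).symm v‖ :=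
  Matrix.l2_opNorm_mulVec A ((WithLp.equiv 2 (Fin n → ℝ)).symm v)

lemma opnorm_orth_le {q : ℕ} (V : Matrix (Fin q) (Fin q) ℝ) (hV : Vᵀ * V = 1) : ‖V‖ ≤ 1 := by
  apply opnorm_le_of_forall V zero_le_one
  intro v
  rw [one_mul]
  have h1 : (V *ᵥ v) ⬝ᵥ (V *ᵥ v) = v ⬝ᵥ v := by
    rw [dotProduct_mulVec, ← mulVec_transpose, mulVec_mulVec, hV, one_mulVec]
  apply le_of_sq_le_sq' (norm_nonneg _) (norm_nonneg _)
  rw [euc_norm_sq, euc_norm_sq, h1]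

lemma opnorm_diag_le {q : ℕ} (v : Fin q → ℝ) {c : ℝ} (hc : 0 ≤ c) (h : ∀ i, |v i| ≤ c) :
    ‖(Matrix.diagonal v : Matrix (Fin q) (Fin q) ℝ)‖ ≤ c := by
  apply opnorm_le_of_forall _ hc
  intro x
  apply le_of_sq_le_sq' (norm_nonneg _) (by positivity)
  rw [euc_norm_sq, mul_pow, euc_norm_sq]
  have e1 : (Matrix.diagonal v *ᵥ x) ⬝ᵥ (Matrix.diagonal v *ᵥ x) = ∑ i, (v i)^2 * (x i)^2 := by
    simp [Matrix.mulVec_diagonal, dotProduct]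
    ring_nf
  have e2 : c ^ 2 * (x ⬝ᵥ x) = ∑ i, c^2 * (x i)^2 := by
    simp [dotProduct, Finset.mul_sum]
    ring_nf
  rw [e1, e2]
  apply Finset.sum_le_sum
  intro i _
  have h1 : (v i)^2 ≤ c^2 := by nlinarith [sq_abs (v i), abs_nonneg (v i), h i]
  exact mul_le_mul_of_nonneg_right h1 (sq_nonneg _)

open scoped MatrixOrder in
lemma opnorm_psd_mono {d : ℕ} {A B : Matrix (Fin d) (Fin d) ℝ}
    (hA : A.PosSemidef) (h : ∀ x : Fin d → ℝ, x ⬝ᵥ (A *ᵥ x) ≤ x ⬝ᵥ (B *ᵥ x)) : ‖A‖ ≤ ‖B‖ := by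
  classical
  set C := CFC.sqrt A with hCdef
  have hC : C.PosSemidef := (CFC.sqrt_nonneg A).posSemidef
  have hCC : C * C = A := CFC.sqrt_mul_sqrt_self A hA.nonneg
  have hCt : Cᵀ = C := by
    rw [← Matrix.conjTranspose_eq_transpose_of_trivial]; exact hC.1
  have hBnn : (0:ℝ) ≤ ‖B‖ := norm_nonneg _
  have key : ‖A‖ ≤ ‖C‖ * Real.sqrt ‖B‖ := by
    apply opnorm_le_of_forall _ (by positivity)
    intro x
    have hy2 : ‖(WithLp.equiv 2 (Fin d → ℝ)).symm (C *ᵥ x)‖^2 ≤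
        ‖B‖ * ‖(WithLp.equiv 2 (Fin d → ℝ)).symm x‖^2 := by
      rw [euc_norm_sq, euc_norm_sq]
      have e1 : (C *ᵥ x) ⬝ᵥ (C *ᵥ x) = x ⬝ᵥ (A *ᵥ x) := by
        rw [dotProduct_mulVec, ← mulVec_transpose, mulVec_mulVec, hCt, hCC]
        exact dotProduct_comm _ _
      rw [e1]
      calc x ⬝ᵥ (A *ᵥ x) ≤ x ⬝ᵥ (B *ᵥ x) := h x
        _ ≤ ‖B‖ * (x ⬝ᵥ x) := by
            rw [euc_inner_eq, ← euc_norm_sq]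
            calc (inner ℝ ((WithLp.equiv 2 (Fin d → ℝ)).symm x)
                ((WithLp.equiv 2 (Fin d → ℝ)).symm (B *ᵥ x)) : ℝ) ≤
                ‖(WithLp.equiv 2 (Fin d → ℝ)).symm x‖ *
                  ‖(WithLp.equiv 2 (Fin d → ℝ)).symm (B *ᵥ x)‖ := real_inner_le_norm _ _
              _ ≤ ‖(WithLp.equiv 2 (Fin d → ℝ)).symm x‖ *
                  (‖B‖ * ‖(WithLp.equiv 2 (Fin d → ℝ)).symm x‖) := by
                  apply mul_le_mul_of_nonneg_left (mulVec_norm_le B x) (norm_nonneg _)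
              _ = ‖B‖ * ‖(WithLp.equiv 2 (Fin d → ℝ)).symm x‖^2 := by ring
    calc ‖(WithLp.equiv 2 (Fin d → ℝ)).symm (A *ᵥ x)‖
        = ‖(WithLp.equiv 2 (Fin d → ℝ)).symm (C *ᵥ (C *ᵥ x))‖ := by
          rw [← hCC, ← mulVec_mulVec]
      _ ≤ ‖C‖ * ‖(WithLp.equiv 2 (Fin d → ℝ)).symm (C *ᵥ x)‖ := mulVec_norm_le C (C *ᵥ x)
      _ ≤ ‖C‖ * (Real.sqrt ‖B‖ * ‖(WithLp.equiv 2 (Fin d → ℝ)).symm x‖) := by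
          apply mul_le_mul_of_nonneg_left _ (norm_nonneg _)
          apply le_of_sq_le_sq' (norm_nonneg _) (by positivity)
          rw [mul_pow, Real.sq_sqrt hBnn]
          exact hy2
      _ = ‖C‖ * Real.sqrt ‖B‖ * ‖(WithLp.equiv 2 (Fin d → ℝ)).symm x‖ := by ring
  have hCsq : ‖C‖ * ‖C‖ = ‖A‖ := by
    rw [← Matrix.l2_opNorm_conjTranspose_mul_self C, hC.1, hCC]
  nlinarith [norm_nonneg A, norm_nonneg C, Real.sq_sqrt hBnn, Real.sqrt_nonneg ‖B‖]

lemma opnorm_le_sSup_spectrum {d : ℕ} {A : Matrix (Fin d) (Fin d) ℝ} (hA : A.PosSemidef) :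
    ‖A‖ ≤ sSup (spectrum ℝ A) := by
  classical
  rcases Nat.eq_zero_or_pos d with hd | hd
  · subst hd
    haveI : Subsingleton (Matrix (Fin 0) (Fin 0) ℝ) := ⟨fun a b => by ext i; exact i.elim0⟩
    have hspec : spectrum ℝ A = ∅ := by
      ext x
      simp only [Set.mem_empty_iff_false, iff_false, spectrum.mem_iff, not_not]
      exact isUnit_of_subsingleton _
    rw [hspec, Real.sSup_empty, Subsingleton.elim A 0, norm_zero]
  · haveI : Nonempty (Fin d) := ⟨⟨0, hd⟩⟩
    have hH := hA.1
    set U : Matrix (Fin d) (Fin d) ℝ := (hH.eigenvectorUnitary : Matrix (Fin d) (Fin d) ℝ) with hU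
    have hspecd : A = U * Matrix.diagonal (RCLike.ofReal ∘ hH.eigenvalues) * star U :=
      hH.spectral_theorem
    have hdiag : Matrix.diagonal (RCLike.ofReal ∘ hH.eigenvalues) =
        Matrix.diagonal hH.eigenvalues := by
      congr 1
    have hBdd : BddAbove (spectrum ℝ A) := Matrix.finite_real_spectrum.bddAbove
    have hmem : ∀ i, hH.eigenvalues i ∈ spectrum ℝ A := hH.eigenvalues_mem_spectrum_real
    have hle : ∀ i, hH.eigenvalues i ≤ sSup (spectrum ℝ A) := fun i => le_csSup hBdd (hmem i)
    have hnn : ∀ i, 0 ≤ hH.eigenvalues i := hA.eigenvalues_nonneg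
    have hcnn : 0 ≤ sSup (spectrum ℝ A) := le_trans (hnn ⟨0, hd⟩) (hle ⟨0, hd⟩)
    have hUorth : Uᵀ * U = 1 := by
      rw [← Matrix.conjTranspose_eq_transpose_of_trivial]
      exact Unitary.coe_star_mul_self hH.eigenvectorUnitary
    have hUorth2 : (star U)ᵀ * star U = 1 := by
      rw [← Matrix.conjTranspose_eq_transpose_of_trivial]
      show star (star U) * star U = 1
      rw [star_star]
      exact Unitary.coe_mul_star_self hH.eigenvectorUnitary
    calc ‖A‖ = ‖U * Matrix.diagonal hH.eigenvalues * star U‖ := by rw [← hdiag, ← hspecd]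
      _ ≤ ‖U * Matrix.diagonal hH.eigenvalues‖ * ‖star U‖ := Matrix.l2_opNorm_mul _ _
      _ ≤ (‖U‖ * ‖Matrix.diagonal hH.eigenvalues‖) * ‖star U‖ := by
          apply mul_le_mul_of_nonneg_right (Matrix.l2_opNorm_mul _ _) (norm_nonneg _)
      _ ≤ (1 * sSup (spectrum ℝ A)) * 1 := by
          apply mul_le_mul
          apply mul_le_mul (opnorm_orth_le U hUorth) ?_ (norm_nonneg _) zero_le_one
          · exact opnorm_diag_le _ hcnn (fun i => by rw [abs_of_nonneg (hnn i)]; exact hle i)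
          · exact opnorm_orth_le _ hUorth2
          · exact norm_nonneg _
          · positivity
      _ = sSup (spectrum ℝ A) := by ring

lemma sum_mulVec' {d K : ℕ} (R : Fin K → Matrix (Fin d) (Fin d) ℝ) (x : Fin d → ℝ) :
    (∑ k, R k) *ᵥ x = ∑ k, R k *ᵥ x := by
  ext i
  simp only [Matrix.mulVec, dotProduct, Finset.sum_apply, Matrix.sum_apply, Finset.sum_mul]
  rw [Finset.sum_comm]

lemma dotProduct_sum' {d K : ℕ} (x : Fin d → ℝ) (w : Fin K → Fin d → ℝ) :
    x ⬝ᵥ (∑ k, w k) = ∑ k, x ⬝ᵥ w k := by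
  simp only [dotProduct, Finset.sum_apply, Finset.mul_sum]
  rw [Finset.sum_comm]

theorem adml_svd_aggregation_bound {d q K : ℕ} (hK : 1 ≤ K)
    (R : Fin K → Matrix (Fin d) (Fin d) ℝ)
    (hpsd : ∀ k, (R k).PosSemidef)
    (W : Fin K → Matrix (Fin d) (Fin q) ℝ)
    (WA : Matrix (Fin d) (Fin q) ℝ)
    (dvec : Fin q → ℝ) (hdvec : ∀ i, 0 < dvec i)
    (V : Matrix (Fin q) (Fin q) ℝ) (hV : Vᵀ * V = 1)
    (hWA : WA * Matrix.diagonal dvec * Vᵀ = ∑ k, R k * W k)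
    (What : Matrix (Fin d) (Fin q) ℝ) (hWhat : specNorm What ≤ 1)
    (S3 : ℝ)
    (hS3 : S3 = lambdaMax (∑ k, R k) / ⨅ i, dvec i) :
    specNorm (WA - What) ≤ (K : ℝ) * S3 * (⨆ k, specNorm (W k - What)) + S3 + 1 := by
  classical
  haveI : Nonempty (Fin K) := ⟨⟨0, hK⟩⟩
  set c : ℝ := lambdaMax (∑ k, R k) with hcdef
  set M : ℝ := ⨆ k, specNorm (W k - What) with hMdef
  -- quadratic forms
  have hq0' : ∀ (j : Fin K) (x : Fin d → ℝ), 0 ≤ x ⬝ᵥ (R j *ᵥ x) := fun j x => by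
    have := (hpsd j).dotProduct_mulVec_nonneg x
    simpa using this
  have hRpsd : (∑ k, R k).PosSemidef := by
    refine Matrix.PosSemidef.of_dotProduct_mulVec_nonneg ?_ ?_
    · show (∑ k, R k)ᴴ = ∑ k, R k
      rw [Matrix.conjTranspose_sum]
      exact Finset.sum_congr rfl fun k _ => (hpsd k).1
    · intro x
      have hsx : star x = x := funext fun _ => rfl
      rw [hsx, sum_mulVec' R x, dotProduct_sum' x (fun k => R k *ᵥ x)]
      exact Finset.sum_nonneg fun j _ => hq0' j x
  have hquad : ∀ (k : Fin K) (x : Fin d → ℝ), x ⬝ᵥ (R k *ᵥ x) ≤ x ⬝ᵥ ((∑ j, R j) *ᵥ x) := by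
    intro k x
    rw [sum_mulVec' R x, dotProduct_sum' x (fun k => R k *ᵥ x)]
    exact Finset.single_le_sum (fun j _ => hq0' j x) (Finset.mem_univ k)
  have hcspec : c = sSup (spectrum ℝ (∑ k, R k)) := rfl
  have hRc : ‖∑ k, R k‖ ≤ c := by rw [hcspec]; exact opnorm_le_sSup_spectrum hRpsd
  have hc0 : 0 ≤ c := le_trans (norm_nonneg _) hRc
  have hRk : ∀ k, ‖R k‖ ≤ c := fun k =>
    le_trans (opnorm_psd_mono (hpsd k) (hquad k)) hRc
  have hWk : ∀ k, ‖W k - What‖ ≤ M := fun k =>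
    le_ciSup (f := fun k => specNorm (W k - What)) (Set.Finite.bddAbove (Set.finite_range _)) k
  have hM0 : 0 ≤ M := le_trans (norm_nonneg (W ⟨0, hK⟩ - What)) (hWk ⟨0, hK⟩)
  have hWhat' : ‖What‖ ≤ 1 := hWhat
  have hsum : ‖∑ k, R k * W k‖ ≤ (K : ℝ) * c * M + c := by
    have hsplit : (∑ k, R k * W k) = (∑ k, R k * (W k - What)) + (∑ k, R k) * What := by
      rw [Matrix.sum_mul, ← Finset.sum_add_distrib]
      exact Finset.sum_congr rfl fun k _ => by rw [Matrix.mul_sub, sub_add_cancel]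
    rw [hsplit]
    calc ‖(∑ k, R k * (W k - What)) + (∑ k, R k) * What‖
        ≤ ‖∑ k, R k * (W k - What)‖ + ‖(∑ k, R k) * What‖ := norm_add_le _ _
      _ ≤ (∑ _k : Fin K, c * M) + c * 1 := by
          apply add_le_add
          · refine le_trans (norm_sum_le _ _) (Finset.sum_le_sum fun k _ => ?_)
            exact le_trans (Matrix.l2_opNorm_mul _ _)
              (mul_le_mul (hRk k) (hWk k) (norm_nonneg _) hc0)
          · exact le_trans (Matrix.l2_opNorm_mul _ _)
              (mul_le_mul hRc hWhat' (norm_nonneg _) hc0)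
      _ = (K : ℝ) * c * M + c := by
          simp [Finset.sum_const, Finset.card_univ]
          ring
  rcases Nat.eq_zero_or_pos q with hq | hq
  · subst hq
    haveI : Subsingleton (Matrix (Fin d) (Fin 0) ℝ) := ⟨fun a b => by ext i j; exact j.elim0⟩
    have h1 : specNorm (WA - What) = 0 := by
      rw [specNorm_eq_l2, Subsingleton.elim (WA - What) 0, norm_zero]
    have h2 : (⨅ i : Fin 0, dvec i) = 0 := Real.iInf_of_isEmpty _
    have h3 : S3 = 0 := by rw [hS3, h2, div_zero]
    rw [h1, h3]
    have : (K : ℝ) * 0 * M + 0 + 1 = 1 := by ring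
    rw [this]
    norm_num
  · haveI : Nonempty (Fin q) := ⟨⟨0, hq⟩⟩
    obtain ⟨i0, hi0⟩ := exists_eq_ciInf_of_finite (f := dvec)
    set dm : ℝ := ⨅ i, dvec i with hdmdef
    have hdm : 0 < dm := hi0 ▸ hdvec i0
    have hdmle : ∀ i, dm ≤ dvec i := fun i => ciInf_le (Set.Finite.bddBelow (Set.finite_range _)) i
    have e1 : WA * Matrix.diagonal dvec = (∑ k, R k * W k) * V := by
      have h := congrArg (fun X => X * V) hWA
      simpa [Matrix.mul_assoc, hV] using h
    have hDD : Matrix.diagonal dvec * Matrix.diagonal (fun i => (dvec i)⁻¹) = 1 := by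
      rw [Matrix.diagonal_mul_diagonal]
      have : (fun i => dvec i * (dvec i)⁻¹) = fun _ : Fin q => (1:ℝ) := by
        funext i; exact mul_inv_cancel₀ (hdvec i).ne'
      rw [this, Matrix.diagonal_one]
    have e2 : WA = (∑ k, R k * W k) * V * Matrix.diagonal (fun i => (dvec i)⁻¹) := by
      calc WA = WA * Matrix.diagonal dvec * Matrix.diagonal (fun i => (dvec i)⁻¹) := by
            rw [Matrix.mul_assoc, hDD, Matrix.mul_one]
        _ = _ := by rw [e1]
    have hV1 : ‖V‖ ≤ 1 := opnorm_orth_le V hV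
    have hDinv : ‖Matrix.diagonal (fun i => (dvec i)⁻¹)‖ ≤ dm⁻¹ := by
      apply opnorm_diag_le _ (by positivity)
      intro i
      rw [abs_of_pos (inv_pos.mpr (hdvec i))]
      exact inv_anti₀ hdm (hdmle i)
    have hWAn : ‖WA‖ ≤ ((K : ℝ) * c * M + c) * dm⁻¹ := by
      rw [e2]
      calc ‖(∑ k, R k * W k) * V * Matrix.diagonal (fun i => (dvec i)⁻¹)‖
          ≤ ‖(∑ k, R k * W k) * V‖ * ‖Matrix.diagonal (fun i => (dvec i)⁻¹)‖ :=
            Matrix.l2_opNorm_mul _ _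
        _ ≤ (‖∑ k, R k * W k‖ * ‖V‖) * ‖Matrix.diagonal (fun i => (dvec i)⁻¹)‖ := by
            apply mul_le_mul_of_nonneg_right (Matrix.l2_opNorm_mul _ _) (norm_nonneg _)
        _ ≤ (((K : ℝ) * c * M + c) * 1) * dm⁻¹ := by
            apply mul_le_mul _ hDinv (norm_nonneg _) (by positivity)
            apply mul_le_mul hsum hV1 (norm_nonneg _) (by positivity)
        _ = ((K : ℝ) * c * M + c) * dm⁻¹ := by ring
    have htri : ‖WA - What‖ ≤ ‖WA‖ + ‖What‖ := norm_sub_le _ _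
    have hfinal : specNorm (WA - What) ≤ ((K : ℝ) * c * M + c) * dm⁻¹ + 1 := by
      rw [specNorm_eq_l2]
      linarith
    have hS3' : S3 = c / dm := hS3
    have hfield : ((K : ℝ) * c * M + c) * dm⁻¹ = (K : ℝ) * (c / dm) * M + c / dm := by
      field_simp
    rw [hS3']
    calc specNorm (WA - What) ≤ ((K : ℝ) * c * M + c) * dm⁻¹ + 1 := hfinal
      _ = (K : ℝ) * (c / dm) * M + c / dm + 1 := by rw [hfield]
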